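/- arXiv:1203.3849 — 2 statements merged into one kernel-verified Lean document; each statement's English description precedes it below -/
import Mathlib

section
/- Let φ : ℝ × X → X be a continuous flow on a topological space X, and suppose there exist points x, y, z ∈ X, open sets U ∋ x and V ∋ y, positive reals π_p, π_q with π_p/π_q irrational, and t₁, t₂ > 0, ε > 0 such that φ(-(t₁ + m·π_p), z) ∈ U for all m ∈ ℕ and φ(t₂ + n·π_q + s, z) ∈ V for all n ∈ ℕ and all |s| < ε. Then there exists τ > 0 such that φ(t, U) ∩ V ≠ ∅ for every t ≥ τ. -/
/-!
Because `πp / πq` is irrational, the group `ℤπp + ℤπq` is dense, so it contains some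
`d = a πp + b πq ∈ (0, ε)`, and one of `a`, `b` is nonnegative. Using multiples of `d` to fill
in a period of `πq`, the sums `m πp + n πq` with `m, n ∈ ℕ` are eventually `ε`-dense in `ℝ`.
For large `t` choose such a sum within `ε` of `t - t₁ - t₂`: the point `φ(-(t₁ + m πp), z) ∈ U`
flows in time `t` to `φ(t₂ + n πq + s, z) ∈ V` with `|s| < ε`.
-/

open Filter

lemma exists_nat_mul_le_lt_succ_mul {d T : ℝ} (hd : 0 < d) (hT : 0 ≤ T) :
    ∃ j : ℕ, j * d ≤ T ∧ T < (j + 1) * d :=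
  ⟨⌊T / d⌋₊, (le_div_iff₀ hd).1 (Nat.floor_le (div_nonneg hT hd.le)),
    (div_lt_iff₀ hd).1 (Nat.lt_floor_add_one _)⟩

/-- Only the remainder of `T` modulo `q` is filled with multiples of `d`, so the `b`-coefficient
stays bounded and is absorbed by the multiple of `q`. -/
lemma eventually_exists_natComb_le_lt_add {p q d : ℝ} (hq : 0 < q) (hd : 0 < d) (a : ℕ) (b : ℤ)
    (hab : a * p + b * q = d) :
    ∀ᶠ T in atTop, ∃ m n : ℕ, m * p + n * q ≤ T ∧ T < m * p + n * q + d := by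
  filter_upwards [eventually_ge_atTop ((q / d * |(b : ℝ)| + 1) * q)] with T hT
  have hC : 0 ≤ (q / d * |(b : ℝ)| + 1) * q := by positivity
  obtain ⟨k, hkT, hTk⟩ := exists_nat_mul_le_lt_succ_mul hq (hC.trans hT)
  obtain ⟨j, hjr, hrj⟩ := exists_nat_mul_le_lt_succ_mul hd (sub_nonneg.2 hkT)
  have hjq : (j : ℝ) ≤ q / d := (le_div_iff₀ hd).2 (by linarith)
  have hn_nonneg : (0 : ℝ) ≤ k + j * b := by
    have hk : q / d * |(b : ℝ)| < k := by nlinarith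
    have hjb : (j : ℝ) * |(b : ℝ)| ≤ q / d * |(b : ℝ)| := by gcongr
    nlinarith [neg_abs_le (b : ℝ), (Nat.cast_nonneg j : (0 : ℝ) ≤ j)]
  obtain ⟨n, hn⟩ := Int.eq_ofNat_of_zero_le (show (0 : ℤ) ≤ k + j * b by exact_mod_cast hn_nonneg)
  have hcomb : ((j * a : ℕ) : ℝ) * p + (n : ℝ) * q = j * d + k * q := by
    rw [← hab, show (n : ℝ) = ((n : ℤ) : ℝ) from rfl, ← hn]
    push_cast; ring
  exact ⟨j * a, n, by rw [hcomb]; constructor <;> linarith⟩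

lemma exists_intComb_mem_Ioo_of_irrational {p q ε : ℝ} (hirr : Irrational (p / q)) (hε : 0 < ε) :
    ∃ a b : ℤ, a * p + b * q ∈ Set.Ioo 0 ε := by
  obtain ⟨w, hwS, hw⟩ :=
    (dense_addSubgroupClosure_pair_iff.2 hirr).exists_mem_open isOpen_Ioo (Set.nonempty_Ioo.2 hε)
  obtain ⟨a, b, rfl⟩ := AddSubgroup.mem_closure_pair.1 hwS
  exact ⟨a, b, by simpa only [zsmul_eq_mul] using hw⟩

lemma eventually_exists_natComb_near {p q ε : ℝ} (hp : 0 < p) (hq : 0 < q)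
    (hirr : Irrational (p / q)) (hε : 0 < ε) :
    ∀ᶠ T in atTop, ∃ m n : ℕ, |T - (m * p + n * q)| < ε := by
  obtain ⟨a, b, hd0, hdε⟩ := exists_intComb_mem_Ioo_of_irrational hirr hε
  have close {m n : ℕ} {T : ℝ} (h₁ : m * p + n * q ≤ T)
      (h₂ : T < m * p + n * q + (a * p + b * q)) : |T - (m * p + n * q)| < ε :=
    abs_lt.2 ⟨by linarith, by linarith⟩
  rcases le_or_gt 0 a with ha | ha
  · lift a to ℕ using ha
    filter_upwards [eventually_exists_natComb_le_lt_add hq hd0 a b rfl]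
      with T ⟨m, n, h₁, h₂⟩
    exact ⟨m, n, close h₁ h₂⟩
  · have hb : 0 ≤ b := by
      by_contra! hb
      have ha' : (a : ℝ) < 0 := by exact_mod_cast ha
      have hb' : (b : ℝ) < 0 := by exact_mod_cast hb
      nlinarith
    lift b to ℕ using hb
    filter_upwards [eventually_exists_natComb_le_lt_add (p := q) hp hd0 b a (by push_cast; ring)]
      with T ⟨n, m, h₁, h₂⟩
    exact ⟨m, n, close (by linarith) (by linarith)⟩

theorem stmt_3_general {X : Type*} [TopologicalSpace X]
    (φ : ℝ × X → X)
    (hadd : ∀ (s t : ℝ) (x : X), φ (s + t, x) = φ (s, φ (t, x)))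
    (x z : X) (U V : Set X)
    (πp πq : ℝ) (hπp : 0 < πp) (hπq : 0 < πq) (hirr : Irrational (πp / πq))
    (t₁ t₂ ε : ℝ) (hε : 0 < ε)
    (hzU : ∀ m : ℕ, φ (-(t₁ + m * πp), z) ∈ U)
    (hzV : ∀ n : ℕ, ∀ s : ℝ, |s| < ε → φ (t₂ + n * πq + s, z) ∈ V) :
    ∃ τ > 0, ∀ t ≥ τ, ∃ u ∈ U, φ (t, u) ∈ V := by
  have hreturn : ∀ᶠ t in atTop, ∃ u ∈ U, φ (t, u) ∈ V := by
    filter_upwards [(tendsto_atTop_add_const_right _ (-(t₁ + t₂)) tendsto_id).eventually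
      (eventually_exists_natComb_near hπp hπq hirr hε)] with t ⟨m, n, hmn⟩
    refine ⟨_, hzU m, ?_⟩
    rw [← hadd, show t + -(t₁ + m * πp) =
      t₂ + n * πq + (t + -(t₁ + t₂) - (m * πp + n * πq)) by ring]
    exact hzV n _ hmn
  obtain ⟨C, hC⟩ := eventually_atTop.1 hreturn
  exact ⟨max C 1, by positivity, fun t ht => hC t (le_of_max_le_left ht)⟩

theorem stmt_3 {X : Type*} [TopologicalSpace X]
    (φ : ℝ × X → X) (hcont : Continuous φ)
    (h0 : ∀ x : X, φ (0, x) = x)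
    (hadd : ∀ (s t : ℝ) (x : X), φ (s + t, x) = φ (s, φ (t, x)))
    (x y z : X) (U V : Set X) (hU : IsOpen U) (hV : IsOpen V)
    (hxU : x ∈ U) (hyV : y ∈ V)
    (πp πq : ℝ) (hπp : 0 < πp) (hπq : 0 < πq) (hirr : Irrational (πp / πq))
    (t₁ t₂ ε : ℝ) (ht₁ : 0 < t₁) (ht₂ : 0 < t₂) (hε : 0 < ε)
    (hzU : ∀ m : ℕ, φ (-(t₁ + m * πp), z) ∈ U)
    (hzV : ∀ n : ℕ, ∀ s : ℝ, |s| < ε → φ (t₂ + n * πq + s, z) ∈ V) :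
    ∃ τ > 0, ∀ t ≥ τ, ∃ u ∈ U, φ (t, u) ∈ V :=
  stmt_3_general φ hadd x z U V πp πq hπp hπq hirr t₁ t₂ ε hε hzU hzV
end

section
/- The function H : ℝ² → ℝ defined by H(x,y) = x⁷·sin(1/x) for x ≠ 0 and H(x,y) = 0 for x = 0 is of class C², and its zero level set H⁻¹({0}) has infinitely many connected components. -/
/-!
Away from the origin `x ↦ xⁿ φ(1/x)` is smooth, and each derivative lowers the power of `x` by at
most two, so for `n ≥ 5` and `φ = sin` the first two derivatives still vanish at the origin and
extend continuously there. The zero set of `H` is `Z × ℝ` with `Z = {(kπ)⁻¹ | k ∈ ℤ}`; the first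
projection maps it continuously onto `Z`, which is countable, hence totally disconnected, and
infinite.
-/

open Real Set Filter Topology

noncomputable def oscPow (n : ℕ) (φ : ℝ → ℝ) (x : ℝ) : ℝ :=
  if x = 0 then 0 else x ^ n * φ (1 / x)

namespace oscPow

variable {n : ℕ} {φ φ' φ'' : ℝ → ℝ} {C : ℝ}

@[simp]
lemma apply_zero : oscPow n φ 0 = 0 := if_pos rfl

lemma apply_of_ne {x : ℝ} (hx : x ≠ 0) : oscPow n φ x = x ^ n * φ (1 / x) := if_neg hx

lemma eventuallyEq_of_ne {x : ℝ} (hx : x ≠ 0) :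
    oscPow n φ =ᶠ[𝓝 x] fun y => y ^ n * φ (1 / y) := by
  filter_upwards [isOpen_ne.mem_nhds hx] with y hy
  exact apply_of_ne hy

lemma abs_le (hb : ∀ t, |φ t| ≤ C) (x : ℝ) : |oscPow n φ x| ≤ C * |x| ^ n := by
  rcases eq_or_ne x 0 with rfl | hx
  · have hC : 0 ≤ C := (abs_nonneg _).trans (hb 0)
    simpa using mul_nonneg hC (pow_nonneg (abs_nonneg (0 : ℝ)) n)
  · rw [apply_of_ne hx, abs_mul, abs_pow, mul_comm]
    exact mul_le_mul_of_nonneg_right (hb _) (by positivity)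

lemma tendsto_succ_zero (hb : ∀ t, |φ t| ≤ C) :
    Tendsto (oscPow (n + 1) φ) (𝓝 0) (𝓝 0) := by
  refine squeeze_zero_norm (abs_le hb) ?_
  simpa using ((continuous_abs.pow (n + 1)).const_mul C).tendsto 0

lemma continuous_succ (hc : Continuous φ) (hb : ∀ t, |φ t| ≤ C) :
    Continuous (oscPow (n + 1) φ) := by
  refine continuous_iff_continuousAt.2 fun x => ?_
  rcases eq_or_ne x 0 with rfl | hx
  · simpa [ContinuousAt] using tendsto_succ_zero hb
  · refine ContinuousAt.congr ?_ (eventuallyEq_of_ne hx).symm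
    fun_prop (disch := exact hx)

lemma slope_succ_zero : slope (oscPow (n + 1) φ) 0 = oscPow n φ := by
  ext y
  rcases eq_or_ne y 0 with rfl | hy
  · simp
  · rw [slope_def_field, apply_of_ne hy, apply_of_ne hy, apply_zero]
    field_simp
    ring

lemma hasDerivAt (hd : ∀ t, HasDerivAt φ (φ' t) t) (hb : ∀ t, |φ t| ≤ C) (x : ℝ) :
    HasDerivAt (oscPow (n + 2) φ) ((n + 2) * oscPow (n + 1) φ x - oscPow n φ' x) x := by
  rcases eq_or_ne x 0 with rfl | hx
  · rw [hasDerivAt_iff_tendsto_slope, slope_succ_zero]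
    simpa using (tendsto_succ_zero hb).mono_left nhdsWithin_le_nhds
  · have hinv : HasDerivAt (fun y => φ (1 / y)) (φ' (1 / x) * -(x ^ 2)⁻¹) x := by
      simpa only [one_div, Function.comp_def] using (hd x⁻¹).comp x (hasDerivAt_inv hx)
    refine (((hasDerivAt_pow (n + 2) x).mul hinv).congr_deriv ?_).congr_of_eventuallyEq
      (eventuallyEq_of_ne hx)
    rw [apply_of_ne hx, apply_of_ne hx]
    field_simp
    push_cast
    ring

lemma deriv_eq (hd : ∀ t, HasDerivAt φ (φ' t) t) (hb : ∀ t, |φ t| ≤ C) :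
    deriv (oscPow (n + 2) φ) = fun x => (n + 2) * oscPow (n + 1) φ x - oscPow n φ' x :=
  funext fun x => (hasDerivAt hd hb x).deriv

lemma differentiable (hd : ∀ t, HasDerivAt φ (φ' t) t) (hb : ∀ t, |φ t| ≤ C) :
    Differentiable ℝ (oscPow (n + 2) φ) :=
  fun x => (hasDerivAt hd hb x).differentiableAt

lemma contDiff_one (hd : ∀ t, HasDerivAt φ (φ' t) t) (hc' : Continuous φ')
    (hb : ∀ t, |φ t| ≤ C) (hb' : ∀ t, |φ' t| ≤ C) : ContDiff ℝ 1 (oscPow (n + 3) φ) := by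
  have hc : Continuous φ := Differentiable.continuous fun t => (hd t).differentiableAt
  refine contDiff_one_iff_deriv.2 ⟨differentiable hd hb, ?_⟩
  rw [deriv_eq hd hb]
  exact (continuous_const.mul (continuous_succ hc hb)).sub (continuous_succ hc' hb')

lemma contDiff_two (hd : ∀ t, HasDerivAt φ (φ' t) t) (hd' : ∀ t, HasDerivAt φ' (φ'' t) t)
    (hc'' : Continuous φ'') (hb : ∀ t, |φ t| ≤ C) (hb' : ∀ t, |φ' t| ≤ C)
    (hb'' : ∀ t, |φ'' t| ≤ C) : ContDiff ℝ 2 (oscPow (n + 5) φ) := by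
  rw [show (2 : WithTop ℕ∞) = 1 + 1 from rfl, contDiff_succ_iff_deriv]
  refine ⟨differentiable hd hb, by simp, ?_⟩
  rw [deriv_eq hd hb]
  exact (contDiff_const.mul (contDiff_one hd (Differentiable.continuous fun t => (hd' t).differentiableAt) hb hb')).sub
    (contDiff_one hd' hc'' hb' hb'')

end oscPow

lemma contDiff_two_oscPow_sin (n : ℕ) : ContDiff ℝ 2 (oscPow (n + 5) sin) :=
  oscPow.contDiff_two hasDerivAt_sin hasDerivAt_cos continuous_sin.neg abs_sin_le_one
    abs_cos_le_one fun t => (abs_neg (sin t)).trans_le (abs_sin_le_one t)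

-- `k = 0` accounts for the origin, as `(0 : ℝ)⁻¹ = 0`.
lemma oscPow_sin_preimage_zero (n : ℕ) :
    oscPow n sin ⁻¹' {0} = range fun k : ℤ => (k * π)⁻¹ := by
  ext x
  rcases eq_or_ne x 0 with rfl | hx
  · simp
  · simp only [mem_preimage, mem_singleton_iff, oscPow.apply_of_ne hx, mem_range,
      mul_eq_zero, pow_eq_zero_iff', hx, false_and, false_or, sin_eq_zero_iff, one_div,
      inv_eq_iff_eq_inv]

lemma injective_inv_intCast_mul_pi : Function.Injective fun k : ℤ => (k * π)⁻¹ :=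
  inv_injective.comp ((mul_left_injective₀ pi_ne_zero).comp Int.cast_injective)

lemma Continuous.infinite_connectedComponents {X Y : Type*} [TopologicalSpace X]
    [TopologicalSpace Y] [TotallyDisconnectedSpace Y] [Infinite Y] {f : X → Y}
    (hf : Continuous f) (hsurj : Function.Surjective f) : Infinite (ConnectedComponents X) :=
  Infinite.of_surjective hf.connectedComponentsLift
    (Function.Surjective.of_comp (g := ((↑) : X → ConnectedComponents X)) hsurj)

theorem stmt_6 (H : ℝ × ℝ → ℝ)
    (hH : ∀ p : ℝ × ℝ, H p = if p.1 = 0 then 0 else p.1 ^ 7 * Real.sin (1 / p.1)) :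
    ContDiff ℝ 2 H ∧ Infinite (ConnectedComponents ↥(H ⁻¹' {0})) := by
  obtain rfl : H = oscPow 7 sin ∘ Prod.fst := funext hH
  refine ⟨(contDiff_two_oscPow_sin 2).comp contDiff_fst, ?_⟩
  set Z := oscPow 7 sin ⁻¹' {0} with hZ
  rw [oscPow_sin_preimage_zero] at hZ
  have : Countable Z := hZ ▸ countable_range _
  have : Infinite Z := hZ ▸ (infinite_range_of_injective injective_inv_intCast_mul_pi).to_subtype
  exact Continuous.infinite_connectedComponents (f := fun p => (⟨p.1.1, p.2⟩ : Z))
    (by fun_prop) fun z => ⟨⟨(z, 0), z.2⟩, rfl⟩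
end
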